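/- arXiv:1203.1377 — 3 statements merged into one kernel-verified Lean document; each statement's English description precedes it below -/
import Mathlib

section
/- Let b₀ > 0 and let φ : (−b₀, b₀) → ℝ be a C^∞ function satisfying the Finsler conditions. Then 𝓔(s) = 0 for all s ∈ (−b₀, b₀) if and only if there exists a constant ε ∈ ℝ such that φ(s) − φ(−s) = 2ε·s for all s ∈ (−b₀, b₀), i.e. if and only if φ is the sum of an even function and the linear function s ↦ ε·s. -/
/-- `𝓔(s) := s·(φ'(s)·φ''(-s) + φ'(-s)·φ''(s)) + (φ(-s)·φ''(s) - φ(s)·φ''(-s))`. -/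
noncomputable def calE (φ : ℝ → ℝ) (s : ℝ) : ℝ :=
  s * (deriv φ s * deriv (deriv φ) (-s) + deriv φ (-s) * deriv (deriv φ) s)
    + (φ (-s) * deriv (deriv φ) s - φ s * deriv (deriv φ) (-s))

/-- A function with vanishing derivative on an open convex set is constant there. -/
lemma const_of_hasDerivAt_zero {f : ℝ → ℝ} {s : Set ℝ} (hc : Convex ℝ s) (ho : IsOpen s)
    (hf : ∀ x ∈ s, HasDerivAt f 0 x) {x y : ℝ} (hx : x ∈ s) (hy : y ∈ s) : f x = f y := by
  refine hc.is_const_of_fderivWithin_eq_zero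
    (fun z hz => ((hf z hz).differentiableAt).differentiableWithinAt) (fun z hz => ?_) hx hy
  rw [fderivWithin_of_isOpen ho hz, (hf z hz).hasFDerivAt.fderiv]
  ext; simp

/-- For `φ` satisfying the Finsler conditions on `(-b₀, b₀)`,
`𝓔 ≡ 0` iff `φ(s) - φ(-s) = 2ε·s` for some constant `ε`, i.e. iff `φ` is the sum
of an even function and a linear one. -/
theorem calE_eq_zero_iff_even_plus_linear
    (b₀ : ℝ) (hb₀ : 0 < b₀) (φ : ℝ → ℝ)
    (hsmooth : ContDiffOn ℝ (⊤ : ℕ∞) φ (Set.Ioo (-b₀) b₀))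
    (hpos : ∀ s ∈ Set.Ioo (-b₀) b₀, 0 < φ s)
    (hmain : ∀ b s : ℝ, |s| ≤ b → b < b₀ →
      0 < φ s - s * deriv φ s + (b ^ 2 - s ^ 2) * deriv (deriv φ) s)
    (hsub : ∀ s : ℝ, |s| < b₀ → 0 < φ s - s * deriv φ s) :
    (∀ s ∈ Set.Ioo (-b₀) b₀, calE φ s = 0) ↔
      ∃ ε : ℝ, ∀ s ∈ Set.Ioo (-b₀) b₀, φ s - φ (-s) = 2 * ε * s := by
  set S : Set ℝ := Set.Ioo (-b₀) b₀ with hS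
  have hoS : IsOpen S := isOpen_Ioo
  have hcS : Convex ℝ S := convex_Ioo _ _
  have h0S : (0 : ℝ) ∈ S := ⟨by linarith, hb₀⟩
  have hneg : ∀ s ∈ S, -s ∈ S := by
    intro s hs
    simp only [hS, Set.mem_Ioo] at hs ⊢
    constructor <;> linarith
  set f1 : ℝ → ℝ := deriv φ with hf1
  set f2 : ℝ → ℝ := deriv f1 with hf2
  -- basic differentiability facts
  have hφd : ∀ s ∈ S, HasDerivAt φ (f1 s) s := by
    intro s hs
    exact ((hsmooth.differentiableOn (by norm_num)).differentiableAt
      (hoS.mem_nhds hs)).hasDerivAt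
  have hf1smooth : ContDiffOn ℝ (⊤ : ℕ∞) f1 S := hsmooth.deriv_of_isOpen hoS (by norm_num)
  have hf1d : ∀ s ∈ S, HasDerivAt f1 (f2 s) s := by
    intro s hs
    exact ((hf1smooth.differentiableOn (by norm_num)).differentiableAt
      (hoS.mem_nhds hs)).hasDerivAt
  -- T s = φ s - s * φ' s and its derivative
  set T : ℝ → ℝ := fun s => φ s - s * f1 s with hT
  have hTd : ∀ s ∈ S, HasDerivAt T (-(s * f2 s)) s := by
    intro s hs
    have h := (hφd s hs).sub ((hasDerivAt_id s).mul (hf1d s hs))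
    refine h.congr_deriv ?_
    simp only [id_eq]; ring
  have hTnegd : ∀ s ∈ S, HasDerivAt (fun x => T (-x)) (-(s * f2 (-s))) s := by
    intro s hs
    have h := (hTd (-s) (hneg s hs)).comp s (hasDerivAt_neg s)
    refine h.congr_deriv ?_
    ring
  have hTpos : ∀ s ∈ S, 0 < T s := by
    intro s hs
    exact hsub s (abs_lt.2 ⟨hs.1, hs.2⟩)
  -- the key algebraic identity: calE φ s = T(-s)·f2 s - T s · f2 (-s)
  have hEid : ∀ s : ℝ, calE φ s = T (-s) * f2 s - T s * f2 (-s) := by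
    intro s
    simp only [calE, hT, hf1, hf2]
    ring
  constructor
  · -- forward direction
    intro hE
    -- Q = T s / T (-s) has zero derivative
    have hQd : ∀ s ∈ S, HasDerivAt (fun x => T x / T (-x)) 0 s := by
      intro s hs
      have hne : T (-s) ≠ 0 := ne_of_gt (hTpos _ (hneg s hs))
      have h := (hTd s hs).div (hTnegd s hs) hne
      refine h.congr_deriv ?_
      have hE' : T (-s) * f2 s - T s * f2 (-s) = 0 := by rw [← hEid s]; exact hE s hs
      rw [div_eq_zero_iff]
      left
      linear_combination (-s) * hE'
    have hTsym : ∀ s ∈ S, T s = T (-s) := by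
      intro s hs
      have hconst := const_of_hasDerivAt_zero hcS hoS hQd hs h0S
      have hne : T (-s) ≠ 0 := ne_of_gt (hTpos _ (hneg s hs))
      rw [neg_zero, div_self (ne_of_gt (hTpos 0 h0S))] at hconst
      field_simp at hconst
      exact hconst
    -- differentiate T s = T (-s) to get f2 s = f2 (-s)
    have hf2sym : ∀ s ∈ S, f2 s = f2 (-s) := by
      intro s hs
      rcases eq_or_ne s 0 with rfl | hs0
      · simp
      · have heq : (fun x => T x) =ᶠ[nhds s] (fun x => T (-x)) :=
          Filter.eventuallyEq_of_mem (hoS.mem_nhds hs) (fun x hx => hTsym x hx)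
        have h1 : HasDerivAt T (-(s * f2 (-s))) s := (hTnegd s hs).congr_of_eventuallyEq heq
        have h2 := (hTd s hs).unique h1
        have : s * f2 s = s * f2 (-s) := by linarith
        exact mul_left_cancel₀ hs0 this
      -- W = f1 s + f1 (-s) is constant
    have hWd : ∀ s ∈ S, HasDerivAt (fun x => f1 x + f1 (-x)) 0 s := by
      intro s hs
      have h := (hf1d s hs).add (((hf1d (-s) (hneg s hs)).comp s (hasDerivAt_neg s)))
      have : f2 s + f2 (-s) * (-1) = 0 := by rw [hf2sym s hs]; ring
      rw [← this]; exact h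
    refine ⟨f1 0, fun s hs => ?_⟩
    have hW := const_of_hasDerivAt_zero hcS hoS hWd hs h0S
    simp only [neg_zero] at hW
    -- T s = T (-s) gives φ s - φ (-s) = s * (f1 s + f1 (-s)) = s * 2 f1 0
    have h1 : φ s - φ (-s) = s * (f1 s + f1 (-s)) := by
      have := hTsym s hs
      simp only [hT, neg_neg] at this
      linear_combination this
    rw [h1, hW]; ring
  · -- converse direction
    rintro ⟨ε, hψ⟩ s hs
    -- φ' s + φ' (-s) = 2ε on S
    have hd1 : ∀ t ∈ S, f1 t + f1 (-t) = 2 * ε := by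
      intro t ht
      have heq : φ =ᶠ[nhds t] (fun x => φ (-x) + 2 * ε * x) := by
        refine Filter.eventuallyEq_of_mem (hoS.mem_nhds ht) (fun x hx => ?_)
        have := hψ x hx; linarith
      have h1 : HasDerivAt φ (f1 (-t) * (-1) + 2 * ε) t := by
        refine HasDerivAt.congr_of_eventuallyEq ?_ heq
        have hlin : HasDerivAt (fun x : ℝ => 2 * ε * x) (2 * ε) t := by
          simpa using (hasDerivAt_id t).const_mul (2 * ε)
        exact ((hφd (-t) (hneg t ht)).comp t (hasDerivAt_neg t)).add hlin
      have := (hφd t ht).unique h1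
      linarith
    -- f2 s = f2 (-s)
    have hd2 : f2 s = f2 (-s) := by
      have heq : f1 =ᶠ[nhds s] (fun x => 2 * ε - f1 (-x)) := by
        refine Filter.eventuallyEq_of_mem (hoS.mem_nhds hs) (fun x hx => ?_)
        have := hd1 x hx; linarith
      have h1 : HasDerivAt f1 (0 - f2 (-s) * (-1)) s := by
        refine HasDerivAt.congr_of_eventuallyEq ?_ heq
        exact (hasDerivAt_const s (2 * ε)).sub
          ((hf1d (-s) (hneg s hs)).comp s (hasDerivAt_neg s))
      have := (hf1d s hs).unique h1
      linarith
    -- T s = T (-s)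
    have hT' : T s = T (-s) := by
      have h1 := hψ s hs
      have h2 := hd1 s hs
      simp only [hT, neg_neg]
      linear_combination h1 - s * h2
    rw [hEid s, hT', hd2]
    ring
end

section
/- Let b > 0 and let φ be a twice differentiable real function defined on an interval containing [−b, b]. Suppose that at a point s ∈ (−b, b) one has φ(s) − s·φ'(s) + (b² − s²)·φ''(s) > 0 and φ(−s) + s·φ'(−s) + (b² − s²)·φ''(−s) > 0, that 𝓕_b(s) = 0, and that φ'(s) ≠ 0. Then φ'(−s) ≠ 0 and φ'(s)·(−φ'(−s)) > 0; that is, φ and the reversed function φ̄(s) := φ(−s) have derivatives of the same sign at s. -/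
/-- `𝓕_b(s) := (b² - s²)·(φ'(s)·φ''(-s) + φ'(-s)·φ''(s)) + (φ(-s)·φ'(s) + φ(s)·φ'(-s))`. -/
noncomputable def calF (φ : ℝ → ℝ) (b s : ℝ) : ℝ :=
  (b ^ 2 - s ^ 2) * (deriv φ s * deriv (deriv φ) (-s) + deriv φ (-s) * deriv (deriv φ) s)
    + (φ (-s) * deriv φ s + φ s * deriv φ (-s))

theorem mul_neg_pos_of_mul_add_mul_eq_zero {R : Type*} [CommRing R] [LinearOrder R]
    [IsStrictOrderedRing R] {u v A B : R} (hA : 0 < A) (hB : 0 < B) (h : u * A + v * B = 0)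
    (hu : u ≠ 0) : 0 < u * -v := by
  have hsq : u * -v * B = u * u * A := by linear_combination (-u) * h
  have hpos : 0 < u * -v * B := hsq ▸ mul_pos (mul_self_pos.2 hu) hA
  exact pos_of_mul_pos_left hpos hB.le

theorem calF_eq_deriv_mul_add_deriv_mul (φ : ℝ → ℝ) (b s : ℝ) :
    calF φ b s =
      deriv φ s * (φ (-s) + s * deriv φ (-s) + (b ^ 2 - s ^ 2) * deriv (deriv φ) (-s))
        + deriv φ (-s) * (φ s - s * deriv φ s + (b ^ 2 - s ^ 2) * deriv (deriv φ) s) := by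
  unfold calF
  ring

theorem same_sign_derivatives_of_calF_eq_zero_general
    (b : ℝ) (φ : ℝ → ℝ)
    (s : ℝ)
    (hB : 0 < φ s - s * deriv φ s + (b ^ 2 - s ^ 2) * deriv (deriv φ) s)
    (hA : 0 < φ (-s) + s * deriv φ (-s) + (b ^ 2 - s ^ 2) * deriv (deriv φ) (-s))
    (hF : calF φ b s = 0)
    (hφ' : deriv φ s ≠ 0) :
    deriv φ (-s) ≠ 0 ∧ 0 < deriv φ s * (-(deriv φ (-s))) := by
  have hpos := mul_neg_pos_of_mul_add_mul_eq_zero hA hB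
    ((calF_eq_deriv_mul_add_deriv_mul φ b s).symm.trans hF) hφ'
  exact ⟨neg_ne_zero.mp (right_ne_zero_of_mul hpos.ne'), hpos⟩

/-- If at a point `s ∈ (-b, b)` both Finsler-type expressions for `φ`
and its reverse are positive, `𝓕_b(s) = 0`, and `φ'(s) ≠ 0`, then `φ'(-s) ≠ 0` and
`φ'(s)·(-φ'(-s)) > 0`, i.e. `φ` and `φ̄(s) = φ(-s)` have derivatives of the same sign. -/
theorem same_sign_derivatives_of_calF_eq_zero
    (b : ℝ) (hb : 0 < b) (φ : ℝ → ℝ)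
    (hd1 : ∀ x ∈ Set.Icc (-b) b, DifferentiableAt ℝ φ x)
    (hd2 : ∀ x ∈ Set.Icc (-b) b, DifferentiableAt ℝ (deriv φ) x)
    (s : ℝ) (hs : s ∈ Set.Ioo (-b) b)
    (hB : 0 < φ s - s * deriv φ s + (b ^ 2 - s ^ 2) * deriv (deriv φ) s)
    (hA : 0 < φ (-s) + s * deriv φ (-s) + (b ^ 2 - s ^ 2) * deriv (deriv φ) (-s))
    (hF : calF φ b s = 0)
    (hφ' : deriv φ s ≠ 0) :
    deriv φ (-s) ≠ 0 ∧ 0 < deriv φ s * (-(deriv φ (-s))) :=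
  same_sign_derivatives_of_calF_eq_zero_general b φ s hB hA hF hφ'
end

section
/- Let U ⊆ ℝ² be an open set and let ν, b₁, b₂ : U → ℝ be C² functions satisfying on U the system: (i) ∂b₂/∂x¹ − ∂b₁/∂x² = 0; (ii) ∂b₁/∂x¹ + ∂b₂/∂x² = 0; (iii) (1/2)·(∂b₁/∂x¹ − ∂b₂/∂x²) = b₁·∂ν/∂x¹ − b₂·∂ν/∂x²; (iv) (1/2)·(∂b₂/∂x¹ + ∂b₁/∂x²) = b₁·∂ν/∂x² + b₂·∂ν/∂x¹. Then at every point of U where (b₁, b₂) ≠ (0, 0), the function ν is harmonic: ∂²ν/∂x¹∂x¹ + ∂²ν/∂x²∂x² = 0. -/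
/-- Partial derivative of `f : ℝ × ℝ → ℝ` in the direction of the first coordinate. -/
noncomputable def pd₁ (f : ℝ × ℝ → ℝ) (p : ℝ × ℝ) : ℝ := fderiv ℝ f p (1, 0)

/-- Partial derivative of `f : ℝ × ℝ → ℝ` in the direction of the second coordinate. -/
noncomputable def pd₂ (f : ℝ × ℝ → ℝ) (p : ℝ × ℝ) : ℝ := fderiv ℝ f p (0, 1)

/-!
With `F = b₁ + i b₂` and `W = ∂₁ν + i ∂₂ν`, equations (i)–(iv) say exactly that `∂₁F = F W` and
`∂₂F = -i F W`. Equality of the mixed partials `∂₂∂₁F = ∂₁∂₂F` then reduces, after cancelling the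
`F W²` terms, to `F (∂₂W + i ∂₁W) = 0`. Where `F ≠ 0` this forces `∂₂W + i ∂₁W = 0`, whose
imaginary part is `∂₁∂₁ν + ∂₂∂₂ν`.
-/

open Filter Topology Complex

section

variable {E : Type*} [NormedAddCommGroup E] [NormedSpace ℝ E]
  {G : Type*} [NormedAddCommGroup G] [NormedSpace ℝ G]

theorem ContDiffAt.contDiffAt_fderiv_apply {f : E → G} {p : E} (hf : ContDiffAt ℝ 2 f p)
    (v : E) : ContDiffAt ℝ 1 (fun q => fderiv ℝ f q v) p :=
  (hf.fderiv_right le_rfl).clm_apply contDiffAt_const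

theorem ContDiffAt.fderiv_fderiv_apply_comm {f : E → G} {p : E} (hf : ContDiffAt ℝ 2 f p)
    (v w : E) :
    fderiv ℝ (fun q => fderiv ℝ f q v) p w = fderiv ℝ (fun q => fderiv ℝ f q w) p v := by
  have hd := (hf.fderiv_right (m := 1) le_rfl).differentiableAt one_ne_zero
  rw [fderiv_clm_apply hd (differentiableAt_const v),
    fderiv_clm_apply hd (differentiableAt_const w)]
  simpa using hf.isSymmSndFDerivAt (by simp) w v

theorem mul_fderiv_sub_eq_zero_of_fderiv_eq_mul {𝔸 : Type*} [NormedCommRing 𝔸]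
    [NormedAlgebra ℝ 𝔸] {F W : E → 𝔸} {p v w : E} {c : 𝔸}
    (hF : ContDiffAt ℝ 2 F p) (hW : DifferentiableAt ℝ W p)
    (hv : (fun q => fderiv ℝ F q v) =ᶠ[𝓝 p] fun q => F q * W q)
    (hw : (fun q => fderiv ℝ F q w) =ᶠ[𝓝 p] fun q => c * (F q * W q)) :
    F p * (fderiv ℝ W p w - c * fderiv ℝ W p v) = 0 := by
  have hFd : DifferentiableAt ℝ F p := hF.differentiableAt two_ne_zero
  have key := hF.fderiv_fderiv_apply_comm v w
  rw [hv.fderiv_eq, hw.fderiv_eq, fderiv_const_mul (a := fun q => F q * W q) (hFd.mul hW),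
    fderiv_fun_mul hFd hW] at key
  simp only [add_apply, smul_apply, smul_eq_mul] at key
  rw [hv.eq_of_nhds, hw.eq_of_nhds] at key
  linear_combination key

def ofReIm (u v : E → ℝ) (q : E) : ℂ := u q + I * v q

theorem ContDiffAt.ofReIm {n : WithTop ℕ∞} {u v : E → ℝ} {p : E}
    (hu : ContDiffAt ℝ n u p) (hv : ContDiffAt ℝ n v p) : ContDiffAt ℝ n (ofReIm u v) p :=
  (ofRealCLM.contDiff.contDiffAt.comp p hu).add
    (contDiffAt_const.mul (ofRealCLM.contDiff.contDiffAt.comp p hv))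

theorem fderiv_ofReIm_apply {u v : E → ℝ} {p : E} (hu : DifferentiableAt ℝ u p)
    (hv : DifferentiableAt ℝ v p) (x : E) :
    fderiv ℝ (ofReIm u v) p x = fderiv ℝ u p x + I * fderiv ℝ v p x := by
  have hu' := ofRealCLM.hasFDerivAt.comp p hu.hasFDerivAt
  have hv' := ofRealCLM.hasFDerivAt.comp p hv.hasFDerivAt
  have h : HasFDerivAt (ofReIm u v) _ p := hu'.add (hv'.const_mul I)
  rw [h.fderiv]
  simp

end

theorem fderiv_ofReIm_eq_of_system {ν b₁ b₂ : ℝ × ℝ → ℝ} {q : ℝ × ℝ}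
    (hb₁ : DifferentiableAt ℝ b₁ q) (hb₂ : DifferentiableAt ℝ b₂ q)
    (h1 : pd₁ b₂ q - pd₂ b₁ q = 0) (h2 : pd₁ b₁ q + pd₂ b₂ q = 0)
    (h3 : (1 / 2) * (pd₁ b₁ q - pd₂ b₂ q) = b₁ q * pd₁ ν q - b₂ q * pd₂ ν q)
    (h4 : (1 / 2) * (pd₁ b₂ q + pd₂ b₁ q) = b₁ q * pd₂ ν q + b₂ q * pd₁ ν q) :
    fderiv ℝ (ofReIm b₁ b₂) q (1, 0) = ofReIm b₁ b₂ q * ofReIm (pd₁ ν) (pd₂ ν) q ∧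
      fderiv ℝ (ofReIm b₁ b₂) q (0, 1) = -I * (ofReIm b₁ b₂ q * ofReIm (pd₁ ν) (pd₂ ν) q) := by
  have e₁ : fderiv ℝ (ofReIm b₁ b₂) q (1, 0) = pd₁ b₁ q + I * pd₁ b₂ q :=
    fderiv_ofReIm_apply hb₁ hb₂ _
  have e₂ : fderiv ℝ (ofReIm b₁ b₂) q (0, 1) = pd₂ b₁ q + I * pd₂ b₂ q :=
    fderiv_ofReIm_apply hb₁ hb₂ _
  rw [e₁, e₂]
  constructor <;> apply Complex.ext <;>
    simp only [ofReIm, add_re, add_im, mul_re, mul_im, neg_re, neg_im, ofReal_re, ofReal_im,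
      I_re, I_im, neg_mul, zero_mul, mul_zero, one_mul, zero_add, add_zero, zero_sub, sub_self] <;>
    linarith

theorem pd₁_pd₁_add_pd₂_pd₂_eq_im {ν : ℝ × ℝ → ℝ} {p : ℝ × ℝ}
    (hν₁ : DifferentiableAt ℝ (pd₁ ν) p) (hν₂ : DifferentiableAt ℝ (pd₂ ν) p) :
    pd₁ (pd₁ ν) p + pd₂ (pd₂ ν) p =
      (fderiv ℝ (ofReIm (pd₁ ν) (pd₂ ν)) p (0, 1) +
        I * fderiv ℝ (ofReIm (pd₁ ν) (pd₂ ν)) p (1, 0)).im := by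
  rw [fderiv_ofReIm_apply hν₁ hν₂, fderiv_ofReIm_apply hν₁ hν₂]
  simp only [add_im, mul_im, ofReal_re, ofReal_im, I_re, I_im, zero_mul, mul_zero, one_mul,
    zero_add, add_re, mul_re, sub_self, pd₁, pd₂]
  ring

/-- If `ν, b₁, b₂` are C² on an open set `U ⊆ ℝ²` and satisfy
(i) `∂₁b₂ - ∂₂b₁ = 0`, (ii) `∂₁b₁ + ∂₂b₂ = 0`,
(iii) `(1/2)(∂₁b₁ - ∂₂b₂) = b₁·∂₁ν - b₂·∂₂ν`,
(iv) `(1/2)(∂₁b₂ + ∂₂b₁) = b₁·∂₂ν + b₂·∂₁ν` on `U`,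
then `ν` is harmonic at every point of `U` where `(b₁, b₂) ≠ (0, 0)`. -/
theorem nu_harmonic_of_system
    (U : Set (ℝ × ℝ)) (hU : IsOpen U) (ν b₁ b₂ : ℝ × ℝ → ℝ)
    (hν : ContDiffOn ℝ 2 ν U) (hb₁ : ContDiffOn ℝ 2 b₁ U) (hb₂ : ContDiffOn ℝ 2 b₂ U)
    (h1 : ∀ p ∈ U, pd₁ b₂ p - pd₂ b₁ p = 0)
    (h2 : ∀ p ∈ U, pd₁ b₁ p + pd₂ b₂ p = 0)
    (h3 : ∀ p ∈ U, (1 / 2) * (pd₁ b₁ p - pd₂ b₂ p) = b₁ p * pd₁ ν p - b₂ p * pd₂ ν p)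
    (h4 : ∀ p ∈ U, (1 / 2) * (pd₁ b₂ p + pd₂ b₁ p) = b₁ p * pd₂ ν p + b₂ p * pd₁ ν p) :
    ∀ p ∈ U, (b₁ p, b₂ p) ≠ ((0 : ℝ), (0 : ℝ)) →
      pd₁ (pd₁ ν) p + pd₂ (pd₂ ν) p = 0 := by
  intro p hp hb
  have hC : ∀ {f : ℝ × ℝ → ℝ}, ContDiffOn ℝ 2 f U → ∀ q ∈ U, ContDiffAt ℝ 2 f q :=
    fun hf q hq => hf.contDiffAt (hU.mem_nhds hq)
  have hsys q (hq : q ∈ U) := fderiv_ofReIm_eq_of_system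
    ((hC hb₁ q hq).differentiableAt two_ne_zero) ((hC hb₂ q hq).differentiableAt two_ne_zero)
    (h1 q hq) (h2 q hq) (h3 q hq) (h4 q hq)
  have hν₁ : ContDiffAt ℝ 1 (pd₁ ν) p := (hC hν p hp).contDiffAt_fderiv_apply (1, 0)
  have hν₂ : ContDiffAt ℝ 1 (pd₂ ν) p := (hC hν p hp).contDiffAt_fderiv_apply (0, 1)
  have hFp : ofReIm b₁ b₂ p ≠ 0 := by
    contrapose! hb
    simpa [ofReIm, Complex.ext_iff] using hb
  have key := mul_fderiv_sub_eq_zero_of_fderiv_eq_mul ((hC hb₁ p hp).ofReIm (hC hb₂ p hp))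
    ((hν₁.ofReIm hν₂).differentiableAt one_ne_zero)
    (eventually_of_mem (hU.mem_nhds hp) fun q hq => (hsys q hq).1)
    (eventually_of_mem (hU.mem_nhds hp) fun q hq => (hsys q hq).2)
  rw [pd₁_pd₁_add_pd₂_pd₂_eq_im (hν₁.differentiableAt one_ne_zero)
    (hν₂.differentiableAt one_ne_zero)]
  simpa using congrArg im ((mul_eq_zero.mp key).resolve_left hFp)
end
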